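/- arXiv:0910.4629 — 6 statements merged into one kernel-verified Lean document; each statement's English description precedes it below -/
import Mathlib

section
/- Let M = {M_1, ..., M_f} be a collection of f mutually unbiased orthonormal bases of ℝ^d (any two vectors x, y from different bases satisfy ⟨x,y⟩ = ±1/√d), with d ≥ 2 and f ≥ 2. Then f ≤ d/2 + 1. -/
/-!
For a unit vector `x` of `ℝ^d` put `P x = x xᵀ - I/d`, a traceless symmetric matrix. Under the
trace pairing `⟨A, C⟩ = tr (A C)` one has `⟨P x, P y⟩ = ⟨x, y⟩² - 1/d` and `⟨P x, I⟩ = 0`. So the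
`P x` of one basis have Gram matrix `Id - J/d` (they sum to zero, and any `d - 1` of them are
independent), while those of two unbiased bases are orthogonal. Hence `I` together with `d - 1`
matrices `P x` from each of the `f` bases is linearly independent inside the symmetric matrices,
giving `f (d - 1) + 1 ≤ d (d + 1) / 2`, that is `f ≤ d/2 + 1`.
-/

open scoped RealInnerProductSpace

open Matrix Finset

section Independence

variable {K E : Type*} [Field K] [AddCommGroup E] [Module K E]

theorem eq_zero_of_forall_sum_mul_ite_castSucc_sub {n : ℕ} {c : K} (hc : c ≠ 0) (g : Fin n → K)
    (h : ∀ b : Fin (n + 1), ∑ a, g a * ((if a.castSucc = b then 1 else 0) - c) = 0) :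
    g = 0 := by
  have hsum : ∑ a, g a = 0 := by
    have hlast := h (Fin.last n)
    simp only [Fin.castSucc_ne_last, if_false, zero_sub, mul_neg, sum_neg_distrib,
      ← sum_mul, neg_eq_zero, mul_eq_zero] at hlast
    exact hlast.resolve_right hc
  funext a₀
  simpa [Fin.castSucc_inj, mul_sub, ← sum_mul, hsum] using h a₀.castSucc

theorem linearIndependent_option_elim_of_gram (B : LinearMap.BilinForm K E) {f n : ℕ}
    {c : K} (hc : c ≠ 0) (e : E) (u : Fin f → Fin (n + 1) → E) (hee : B e e ≠ 0)
    (hue : ∀ i a, B (u i a) e = 0)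
    (huu : ∀ i j a b, B (u i a) (u j b) = if i = j then (if a = b then 1 else 0) - c else 0) :
    LinearIndependent K
      (fun k : Option (Fin f × Fin n) => k.elim e fun ia => u ia.1 ia.2.castSucc) := by
  rw [Fintype.linearIndependent_iff]
  intro g hg
  have pair : ∀ w, g none * B e w + ∑ i, ∑ a, g (some (i, a)) * B (u i a.castSucc) w = 0 := by
    intro w
    simpa [Fintype.sum_option, Fintype.sum_prod_type, map_sum] using
      congrArg (fun s => B s w) hg
  have hnone : g none = 0 := by
    simpa [hue, hee] using pair e
  have hsome : ∀ j, (fun a => g (some (j, a))) = 0 := by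
    intro j
    refine eq_zero_of_forall_sum_mul_ite_castSucc_sub hc _ fun b => ?_
    simpa [hnone, huu] using pair (u j b)
  rintro (_ | ⟨j, a⟩)
  · exact hnone
  · exact congrFun (hsome j) a

end Independence

theorem card_le_choose_of_linearIndependent_isSymm {K α ι : Type*} [Field K] [Fintype α]
    [LinearOrder α] [Fintype ι] {v : ι → Matrix α α K}
    (hv : LinearIndependent K v) (hsymm : ∀ k, (v k).IsSymm) :
    Fintype.card ι ≤ (Fintype.card α + 1).choose 2 := by
  have hres : LinearIndependent K fun k (q : {p : α × α // p.1 ≤ p.2}) => v k q.1.1 q.1.2 := by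
    rw [Fintype.linearIndependent_iff] at hv ⊢
    intro g hg
    refine hv g (Matrix.ext fun i j => ?_)
    rcases le_total i j with hij | hji
    · simpa [Matrix.sum_apply] using congrFun hg ⟨(i, j), hij⟩
    · simpa [Matrix.sum_apply, fun k => (hsymm k).apply j i] using congrFun hg ⟨(j, i), hji⟩
  calc Fintype.card ι ≤ Fintype.card {p : α × α // p.1 ≤ p.2} := by
        simpa using hres.fintype_card_le_finrank
    _ = (Fintype.card α + 1).choose 2 := by
        rw [← Fintype.card_congr Sym2.sortEquiv, Sym2.card]

section TraceMulForm

variable {K α : Type*} [Field K] [Fintype α] [DecidableEq α]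

def traceMulForm : LinearMap.BilinForm K (Matrix α α K) :=
  (LinearMap.mul K (Matrix α α K)).compr₂ (traceLinearMap α K K)

@[simp]
theorem traceMulForm_apply (A C : Matrix α α K) : traceMulForm A C = (A * C).trace := rfl

def tracelessOuter (x : α → K) : Matrix α α K :=
  vecMulVec x x - (Fintype.card α : K)⁻¹ • 1

theorem isSymm_tracelessOuter (x : α → K) : (tracelessOuter x).IsSymm :=
  IsSymm.sub (transpose_vecMulVec x x) (isSymm_one.smul _)

theorem traceMulForm_tracelessOuter_one (hα : (Fintype.card α : K) ≠ 0) {x : α → K}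
    (hx : x ⬝ᵥ x = 1) :
    traceMulForm (tracelessOuter x) 1 = 0 := by
  simp [tracelessOuter, hx, hα]

theorem traceMulForm_tracelessOuter (hα : (Fintype.card α : K) ≠ 0) {x y : α → K}
    (hx : x ⬝ᵥ x = 1) (hy : y ⬝ᵥ y = 1) :
    traceMulForm (tracelessOuter x) (tracelessOuter y) =
      (x ⬝ᵥ y) ^ 2 - (Fintype.card α : K)⁻¹ := by
  simp [tracelessOuter, mul_sub, vecMulVec_mul_vecMulVec, hx, hy, hα]
  ring

end TraceMulForm

theorem card_mul_add_one_le_choose_of_unbiased {K α : Type*} [Field K] [Fintype α]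
    [LinearOrder α] (hα : (Fintype.card α : K) ≠ 0) {f n : ℕ} (x : Fin f → Fin (n + 1) → α → K)
    (hsame : ∀ i a b, x i a ⬝ᵥ x i b = if a = b then 1 else 0)
    (hcross : ∀ i j a b, i ≠ j → (x i a ⬝ᵥ x j b) ^ 2 = (Fintype.card α : K)⁻¹) :
    f * n + 1 ≤ (Fintype.card α + 1).choose 2 := by
  have hunit : ∀ i a, x i a ⬝ᵥ x i a = 1 := fun i a => by simpa using hsame i a a
  have hgram : ∀ i j a b, traceMulForm (tracelessOuter (x i a)) (tracelessOuter (x j b)) =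
      if i = j then (if a = b then 1 else 0) - (Fintype.card α : K)⁻¹ else 0 := by
    intro i j a b
    rw [traceMulForm_tracelessOuter hα (hunit i a) (hunit j b)]
    split_ifs with hij hab
    · subst hij hab; simp [hunit]
    · subst hij; simp [hsame, hab]
    · simp [hcross i j a b hij]
  have hLI := linearIndependent_option_elim_of_gram traceMulForm (inv_ne_zero hα) 1
    (fun i a => tracelessOuter (x i a)) (by simpa using hα)
    (fun i a => traceMulForm_tracelessOuter_one hα (hunit i a)) hgram
  simpa [mul_comm] using card_le_choose_of_linearIndependent_isSymm hLI
    (by rintro (_ | ⟨i, a⟩) <;> simp [isSymm_one, isSymm_tracelessOuter])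

theorem mub_upper_bound_general (d f : ℕ) (hd : 2 ≤ d)
    (B : Fin f → Fin d → EuclideanSpace ℝ (Fin d))
    (horth : ∀ i, Orthonormal ℝ (B i))
    (hmub : ∀ i j a b, i ≠ j →
      ⟪B i a, B j b⟫ = 1 / Real.sqrt d ∨ ⟪B i a, B j b⟫ = -(1 / Real.sqrt d)) :
    (f : ℝ) ≤ (d : ℝ) / 2 + 1 := by
  obtain ⟨n, rfl⟩ : ∃ n, d = n + 2 := ⟨d - 2, by omega⟩
  have hinner : ∀ i j a b, (B i a).ofLp ⬝ᵥ (B j b).ofLp = ⟪B i a, B j b⟫ := fun i j a b => by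
    simp [EuclideanSpace.inner_eq_star_dotProduct, dotProduct_comm]
  have hcount := card_mul_add_one_le_choose_of_unbiased (K := ℝ) (by positivity)
    (fun i a => (B i a).ofLp)
    (fun i a b => by rw [hinner]; exact orthonormal_iff_ite.mp (horth i) a b)
    fun i j a b hij => by
      rw [hinner]
      have hsqrt : Real.sqrt (n + 2 : ℝ) ^ 2 = n + 2 := Real.sq_sqrt (by positivity)
      rcases hmub i j a b hij with h | h <;> simp [h, hsqrt]
  rw [Fintype.card_fin] at hcount
  have hreal : (f : ℝ) * (n + 1) + 1 ≤ (n + 3) * (n + 2) / 2 := by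
    have := (Nat.cast_le (α := ℝ)).mpr hcount
    push_cast [Nat.cast_choose_two] at this
    linarith
  push_cast
  nlinarith

/-- A collection of `f` mutually unbiased orthonormal bases of `ℝ^d` (`d ≥ 2`, `f ≥ 2`)
satisfies `f ≤ d/2 + 1`. -/
theorem mub_upper_bound (d f : ℕ) (hd : 2 ≤ d) (hf : 2 ≤ f)
    (B : Fin f → Fin d → EuclideanSpace ℝ (Fin d))
    (horth : ∀ i, Orthonormal ℝ (B i))
    (hbasis : ∀ i, Submodule.span ℝ (Set.range (B i)) = ⊤)
    (hmub : ∀ i j a b, i ≠ j →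
      ⟪B i a, B j b⟫ = 1 / Real.sqrt d ∨ ⟪B i a, B j b⟫ = -(1 / Real.sqrt d)) :
    (f : ℝ) ≤ (d : ℝ) / 2 + 1 :=
  mub_upper_bound_general d f hd B horth hmub
end

section
/- Let (X,I) be a linked system of symmetric (v,k,λ) designs on f ≥ 3 fibers. Then the pair of constants (σ,τ) defined by the linking condition satisfies (σ,τ) = ((k² - √n(v-k))/v, k(k + √n)/v) or (σ,τ) = ((k² + √n(v-k))/v, k(k - √n)/v), where n = k - λ; in particular n is a perfect square. -/
/-!
Fix a point `x₀` of a fibre `X_i` and let `S` be its `k` neighbours in a third fibre `X_l`.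
For `y` in a second fibre `X_j`, the number `N y` of neighbours of `y` in `S` is `σ` or `τ`
according as `y` is incident with `x₀`. Double counting gives `∑ N y = k²` and
`∑ (N y)² = k (k + (k - 1) λ)`; together with `k + (v - 1) λ = k²` these force
`(σ - τ)² = k - λ`, and `k σ + (v - k) τ = k²` then determines `σ` and `τ`.
-/

open Finset

section DoubleCounting

variable {β γ : Type*} [Fintype β] (r : β → γ → Prop) [∀ y z, Decidable (r y z)]
  (S : Finset γ) {k lam : ℕ}

theorem sum_card_filter_eq_card_mul (hk : ∀ z ∈ S, #{y | r y z} = k) :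
    ∑ y, #(S.filter (r y)) = #S * k := by
  rw [← smul_eq_mul, ← sum_const, ← sum_congr rfl hk]
  exact sum_card_bipartiteAbove_eq_sum_card_bipartiteBelow r

theorem sum_card_filter_sq_add [DecidableEq γ] (hk : ∀ z ∈ S, #{y | r y z} = k)
    (hlam : ∀ z ∈ S, ∀ z' ∈ S, z ≠ z' → #{y | r y z ∧ r y z'} = lam) :
    ∑ y, #(S.filter (r y)) ^ 2 + #S * lam = #S * k + #S ^ 2 * lam := by
  have hpairs : ∑ y, #(S.filter (r y)) ^ 2 = ∑ p ∈ S ×ˢ S, #{y | r y p.1 ∧ r y p.2} := by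
    simp_rw [sq, ← card_product, ← filter_product]
    exact sum_card_bipartiteAbove_eq_sum_card_bipartiteBelow
      (fun y (p : γ × γ) => r y p.1 ∧ r y p.2)
  have hrow : ∀ z ∈ S, ∑ z' ∈ S, #{y | r y z ∧ r y z'} + lam = k + #S * lam := by
    intro z hz
    rw [← add_sum_erase S _ hz, sum_congr rfl fun z' hz' => hlam z hz z' (mem_of_mem_erase hz')
      (ne_of_mem_erase hz').symm, sum_const, card_erase_of_mem hz, smul_eq_mul]
    simp only [and_self, hk z hz]
    rw [add_assoc, ← add_one_mul, Nat.sub_one_add_one (card_pos.mpr ⟨z, hz⟩).ne']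
  calc ∑ y, #(S.filter (r y)) ^ 2 + #S * lam
      = ∑ z ∈ S, (∑ z' ∈ S, #{y | r y z ∧ r y z'} + lam) := by
        rw [hpairs, sum_product, sum_add_distrib, sum_const, smul_eq_mul]
    _ = #S * k + #S ^ 2 * lam := by
        rw [sum_congr rfl hrow, sum_const, smul_eq_mul]
        ring

end DoubleCounting

theorem symmetric_design_card_eq {α β : Type*} [Fintype α] [Fintype β] [DecidableEq α]
    (r : α → β → Prop) [∀ a b, Decidable (r a b)] {k lam : ℕ} (a₀ : α)
    (hrow : #{b | r a₀ b} = k) (hcol : ∀ b, #{a | r a b} = k)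
    (hlam : ∀ a, a₀ ≠ a → #{b | r a₀ b ∧ r a b} = lam) :
    k + (Fintype.card α - 1) * lam = k * k := by
  have hsum := sum_card_filter_eq_card_mul r {b | r a₀ b} fun b _ => hcol b
  simp only [filter_filter, hrow] at hsum
  rw [← hsum, ← add_sum_erase _ _ (mem_univ a₀), sum_congr rfl fun a ha => hlam a
    (ne_of_mem_erase ha).symm, sum_const, card_erase_of_mem (mem_univ a₀), smul_eq_mul]
  simp only [and_self, hrow, card_univ]

theorem sum_ite_eq_card_mul_add {β K : Type*} [Fintype β] [CommRing K] (p : β → Prop)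
    [DecidablePred p] (a b : K) :
    ∑ y, (if p y then a else b) = #{y | p y} * a + (Fintype.card β - #{y | p y}) * b := by
  rw [sum_ite, sum_const, sum_const, nsmul_eq_mul, nsmul_eq_mul, ← card_univ,
    ← card_filter_add_card_filter_not (s := univ) p]
  push_cast
  ring

theorem sq_sub_eq_of_linking_counts {K : Type*} [CommRing K] [IsDomain K] {v k lam σ τ : K}
    (hk : k ≠ 0) (hvk : v - k ≠ 0) (hdesign : k + (v - 1) * lam = k * k)
    (hsum : k * σ + (v - k) * τ = k * k)
    (hsq : k * σ ^ 2 + (v - k) * τ ^ 2 + k * lam = k * k + k ^ 2 * lam) :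
    (σ - τ) ^ 2 = k - lam := by
  -- the three identities combine to `k (v - k) ((σ - τ)² - (k - λ)) = 0`
  refine mul_left_cancel₀ (mul_ne_zero hk hvk) ?_
  linear_combination v * hsq - ((v - k) * τ + k * σ + k ^ 2) * hsum + k ^ 2 * hdesign

theorem linking_constants_eq {K : Type*} [Field K] {v k σ τ m : K} (hv : v ≠ 0)
    (hsum : k * σ + (v - k) * τ = k * k) (hm : σ - τ = -m ∨ σ - τ = m) :
    (σ = (k ^ 2 - m * (v - k)) / v ∧ τ = k * (k + m) / v) ∨
      (σ = (k ^ 2 + m * (v - k)) / v ∧ τ = k * (k - m) / v) := by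
  rcases hm with hm | hm
  · obtain rfl : m = τ - σ := by linear_combination hm
    left
    constructor <;> field_simp <;> linear_combination hsum
  · obtain rfl : m = σ - τ := hm.symm
    right
    constructor <;> field_simp <;> linear_combination hsum

structure IsLinkedSystem {ι α : Type*} [Fintype α] (k lam σ τ : ℕ) (R : ι × α → ι × α → Prop)
    [DecidableRel R] : Prop where
  symm : ∀ p q, R p q ↔ R q p
  card_nbhd : ∀ (i j : ι) (x : α), i ≠ j → #{y | R (i, x) (j, y)} = k
  card_common_nbhd : ∀ (i j : ι) (x x' : α), i ≠ j → x ≠ x' →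
    #{y | R (i, x) (j, y) ∧ R (i, x') (j, y)} = lam
  card_linking : ∀ (i j l : ι) (x y : α), i ≠ j → j ≠ l → i ≠ l →
    #{z | R (i, x) (l, z) ∧ R (j, y) (l, z)} = if R (i, x) (j, y) then σ else τ

namespace IsLinkedSystem

variable {ι α K : Type*} [Fintype α] [CommRing K] {k lam σ τ : ℕ}
  {R : ι × α → ι × α → Prop} [DecidableRel R] {i j l : ι}

theorem card_nbhd_left (hR : IsLinkedSystem k lam σ τ R) (hij : i ≠ j) (y : α) :
    #{x | R (i, x) (j, y)} = k := by
  simpa only [hR.symm (_, y)] using hR.card_nbhd _ _ y hij.symm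

theorem design_identity [DecidableEq α] (hR : IsLinkedSystem k lam σ τ R) (hij : i ≠ j)
    (x₀ : α) : (k : K) + (Fintype.card α - 1) * lam = k * k := by
  have h := symmetric_design_card_eq (fun x y => R (i, x) (j, y)) x₀ (hR.card_nbhd i j x₀ hij)
    (hR.card_nbhd_left hij) fun x hx => hR.card_common_nbhd i j x₀ x hij hx
  have hα : 1 ≤ Fintype.card α := Fintype.card_pos_iff.mpr ⟨x₀⟩
  exact_mod_cast congrArg (Nat.cast : ℕ → K) h

theorem cast_card_linking (hR : IsLinkedSystem k lam σ τ R) (hij : i ≠ j) (hjl : j ≠ l)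
    (hil : i ≠ l) (x₀ y : α) :
    (#{z | R (i, x₀) (l, z) ∧ R (j, y) (l, z)} : K) =
      if R (i, x₀) (j, y) then (σ : K) else τ := by
  rw [hR.card_linking i j l x₀ y hij hjl hil, Nat.cast_ite]

theorem sum_linking_eq (hR : IsLinkedSystem k lam σ τ R) (hij : i ≠ j) (hjl : j ≠ l)
    (hil : i ≠ l) (x₀ : α) : (k : K) * σ + (Fintype.card α - k) * τ = k * k := by
  have h := sum_card_filter_eq_card_mul (fun y z => R (j, y) (l, z)) {z | R (i, x₀) (l, z)}
    fun z _ => hR.card_nbhd_left hjl z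
  rw [hR.card_nbhd i l x₀ hil] at h
  simp only [filter_filter] at h
  have := congrArg (Nat.cast : ℕ → K) h
  push_cast [hR.cast_card_linking hij hjl hil, sum_ite_eq_card_mul_add,
    hR.card_nbhd i j x₀ hij] at this
  exact this

theorem sum_sq_linking_eq [DecidableEq α] (hR : IsLinkedSystem k lam σ τ R) (hij : i ≠ j)
    (hjl : j ≠ l) (hil : i ≠ l) (x₀ : α) :
    (k : K) * σ ^ 2 + (Fintype.card α - k) * τ ^ 2 + k * lam = k * k + k ^ 2 * lam := by
  have h := sum_card_filter_sq_add (fun y z => R (j, y) (l, z)) {z | R (i, x₀) (l, z)}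
    (fun z _ => hR.card_nbhd_left hjl z) fun z _ z' _ hzz' => by
      simpa only [hR.symm (_, z), hR.symm (_, z')] using
        hR.card_common_nbhd l j z z' hjl.symm hzz'
  rw [hR.card_nbhd i l x₀ hil] at h
  simp only [filter_filter] at h
  have := congrArg (Nat.cast : ℕ → K) h
  push_cast [hR.cast_card_linking hij hjl hil, ite_pow, sum_ite_eq_card_mul_add,
    hR.card_nbhd i j x₀ hij] at this
  exact this

end IsLinkedSystem

theorem linked_design_sigma_tau_general (f v k lam σ τ : ℕ) (hf : 3 ≤ f)
    (hkv : k < v) (hlk : lam < k)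
    (R : Fin f × Fin v → Fin f × Fin v → Prop) [DecidableRel R]
    (hsym : ∀ p q, R p q ↔ R q p)
    (hreg : ∀ (i j : Fin f) (x : Fin v), i ≠ j →
      (Finset.univ.filter fun y => R (i, x) (j, y)).card = k)
    (hlam : ∀ (i j : Fin f) (x x' : Fin v), i ≠ j → x ≠ x' →
      (Finset.univ.filter fun y => R (i, x) (j, y) ∧ R (i, x') (j, y)).card = lam)
    (hlink : ∀ (i j l : Fin f) (x y : Fin v), i ≠ j → j ≠ l → i ≠ l →
      (Finset.univ.filter fun z => R (i, x) (l, z) ∧ R (j, y) (l, z)).card =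
        if R (i, x) (j, y) then σ else τ) :
    ∃ m : ℕ, k - lam = m ^ 2 ∧
      (((σ : ℝ) = ((k : ℝ) ^ 2 - (m : ℝ) * ((v : ℝ) - k)) / v ∧
          (τ : ℝ) = (k : ℝ) * ((k : ℝ) + m) / v) ∨
       ((σ : ℝ) = ((k : ℝ) ^ 2 + (m : ℝ) * ((v : ℝ) - k)) / v ∧
          (τ : ℝ) = (k : ℝ) * ((k : ℝ) - m) / v)) := by
  have hR : IsLinkedSystem k lam σ τ R := ⟨hsym, hreg, hlam, hlink⟩
  let i : Fin f := ⟨0, by omega⟩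
  let j : Fin f := ⟨1, by omega⟩
  let l : Fin f := ⟨2, by omega⟩
  have hij : i ≠ j := by simp [i, j, Fin.ext_iff]
  have hjl : j ≠ l := by simp [j, l, Fin.ext_iff]
  have hil : i ≠ l := by simp [i, l, Fin.ext_iff]
  let x₀ : Fin v := ⟨0, by omega⟩
  have hsum {K : Type} [CommRing K] : (k : K) * σ + (v - k) * τ = k * k := by
    simpa using hR.sum_linking_eq hij hjl hil x₀
  have hd : ((σ : ℤ) - τ) ^ 2 = k - lam :=
    sq_sub_eq_of_linking_counts (by omega) (by omega) (by simpa using hR.design_identity hij x₀)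
      hsum (by simpa using hR.sum_sq_linking_eq hij hjl hil x₀)
  refine ⟨((σ : ℤ) - τ).natAbs, ?_,
    linking_constants_eq (Nat.cast_ne_zero.mpr (by omega)) hsum ?_⟩
  · zify [hlk.le]
    rw [sq_abs, hd]
  · rcases Int.natAbs_eq ((σ : ℤ) - τ) with h | h
    · exact Or.inr (by simpa using congrArg (Int.cast : ℤ → ℝ) h)
    · exact Or.inl (by simpa using congrArg (Int.cast : ℤ → ℝ) h)

/-- For a linked system of symmetric `(v,k,λ)` designs on `f ≥ 3` fibers, the linking
constants `(σ, τ)` are `((k² ∓ √n(v-k))/v, k(k ± √n)/v)` where `n = k - λ`; in particular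
`n` is a perfect square. -/
theorem linked_design_sigma_tau (f v k lam σ τ : ℕ) (hf : 3 ≤ f) (hv : 0 < v)
    (hk : 0 < k) (hkv : k < v) (hlk : lam < k)
    (R : Fin f × Fin v → Fin f × Fin v → Prop) [DecidableRel R]
    (hsym : ∀ p q, R p q ↔ R q p)
    (hreg : ∀ (i j : Fin f) (x : Fin v), i ≠ j →
      (Finset.univ.filter fun y => R (i, x) (j, y)).card = k)
    (hlam : ∀ (i j : Fin f) (x x' : Fin v), i ≠ j → x ≠ x' →
      (Finset.univ.filter fun y => R (i, x) (j, y) ∧ R (i, x') (j, y)).card = lam)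
    (hlink : ∀ (i j l : Fin f) (x y : Fin v), i ≠ j → j ≠ l → i ≠ l →
      (Finset.univ.filter fun z => R (i, x) (l, z) ∧ R (j, y) (l, z)).card =
        if R (i, x) (j, y) then σ else τ) :
    ∃ m : ℕ, k - lam = m ^ 2 ∧
      (((σ : ℝ) = ((k : ℝ) ^ 2 - (m : ℝ) * ((v : ℝ) - k)) / v ∧
          (τ : ℝ) = (k : ℝ) * ((k : ℝ) + m) / v) ∨
       ((σ : ℝ) = ((k : ℝ) ^ 2 + (m : ℝ) * ((v : ℝ) - k)) / v ∧
          (τ : ℝ) = (k : ℝ) * ((k : ℝ) - m) / v)) :=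
  linked_design_sigma_tau_general f v k lam σ τ hf hkv hlk R hsym hreg hlam hlink
end

section
/- With the setup of the previous counting lemma (linked system of symmetric (v,k,λ) designs, fibers X_1,...,X_f, relation R_1, parameters σ, τ), one has Σ_{S ∈ binom(X_1,4)} C(α(S),2) = (1/2)(f-1)v[(f-2)k·C(σ,4) + (v-1)·C(λ,4) + (f-2)(v-k)·C(τ,4)]. -/
/-!
Count pairs `(S, (y, y'))` with `S` a 4-subset of the first fiber and `y ≠ y'` points outside it,
every point of `S` adjacent to both. Grouping by `S` gives `2 Σ_S C(α(S), 2)`; grouping by the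
pair gives `Σ C(c(y, y'), 4)`, where `c(y, y')` is the number of common neighbours of `y, y'` in the
first fiber. That number is `λ` on the `v - 1` partners of `y` in its own fiber, and `σ` or `τ` on
the `k`, respectively `v - k`, partners in each of the `f - 2` remaining fibers.
-/

open Finset

theorem Finset.sum_offDiag {α M : Type*} [DecidableEq α] [AddCommMonoid M] (s : Finset α)
    (g : α × α → M) :
    ∑ p ∈ s.offDiag, g p = ∑ x ∈ s, ∑ y ∈ s.erase x, g (x, y) :=
  sum_finset_product _ _ _ fun p => by simp [and_comm, ne_comm]

theorem sum_powersetCard_two_mul_choose_two_eq_sum_offDiag {α β : Type*} [DecidableEq β]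
    (adj : α → β → Prop) [DecidableRel adj] (A : Finset α) (B : Finset β) (n : ℕ) :
    ∑ S ∈ A.powersetCard n, 2 * (#{y ∈ B | ∀ x ∈ S, adj x y}).choose 2
      = ∑ p ∈ B.offDiag, (#{x ∈ A | adj x p.1 ∧ adj x p.2}).choose n := by
  have hcount := sum_card_bipartiteAbove_eq_sum_card_bipartiteBelow (s := A.powersetCard n)
    (t := B.offDiag) (r := fun S p => ∀ x ∈ S, adj x p.1 ∧ adj x p.2)
  convert hcount using 2 with S _ p _
  · rw [Nat.choose_two_right, Nat.mul_div_cancel' (Nat.even_mul_pred_self _).two_dvd,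
      Nat.mul_sub_one, ← offDiag_card]
    congr 1
    ext p
    simp only [mem_offDiag, mem_filter, bipartiteAbove, forall_and]
    tauto
  · rw [← card_powersetCard]
    congr 1
    ext S
    simp only [mem_powersetCard, subset_iff, mem_filter, bipartiteBelow]
    grind

theorem sum_erase_product_univ {ι γ M : Type*} [Fintype ι] [Fintype γ] [DecidableEq ι]
    [DecidableEq γ] [AddCommMonoid M] {i₀ i : ι} (hi : i ≠ i₀) (a : γ) (g : ι × γ → M) :
    ∑ y ∈ (univ.erase i₀ ×ˢ univ).erase (i, a), g y
      = ∑ b ∈ univ.erase a, g (i, b) + ∑ j ∈ univ \ {i₀, i}, ∑ b, g (j, b) := by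
  have hdisj : Disjoint ({i} ×ˢ univ.erase a) ((univ \ {i₀, i}) ×ˢ (univ : Finset γ)) :=
    disjoint_product.2 (Or.inl (by simp))
  have hsplit : (univ.erase i₀ ×ˢ univ).erase (i, a)
      = ({i} ×ˢ univ.erase a).disjUnion ((univ \ {i₀, i}) ×ˢ univ) hdisj := by
    ext ⟨j, b⟩
    simp only [mem_erase, mem_product, disjUnion_eq_union, mem_union, mem_sdiff, mem_insert,
      mem_singleton, mem_univ]
    grind
  rw [hsplit, sum_disjUnion, sum_product, sum_product, sum_singleton]

section LinkedDesign

variable {f v k lam σ τ : ℕ} [NeZero f] {R : Fin f × Fin v → Fin f × Fin v → Prop}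
  [DecidableRel R]

theorem sum_choose_card_commonNeighbors_same_fiber
    (hsame : ∀ (i : Fin f) (y y' : Fin v), i ≠ 0 → y ≠ y' →
      (Finset.univ.filter fun x => R (0, x) (i, y) ∧ R (0, x) (i, y')).card = lam)
    {i : Fin f} (hi : i ≠ 0) (a : Fin v) (n : ℕ) :
    ∑ b ∈ univ.erase a, (#{x | R (0, x) (i, a) ∧ R (0, x) (i, b)}).choose n
      = (v - 1) * lam.choose n := by
  rw [sum_congr rfl fun b hb => by rw [hsame i a b hi (ne_of_mem_erase hb).symm], sum_const,
    card_erase_of_mem (mem_univ a), card_univ, Fintype.card_fin, smul_eq_mul]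

theorem sum_choose_card_commonNeighbors_other_fiber
    (hreg : ∀ (i j : Fin f) (y : Fin v), i ≠ j →
      (Finset.univ.filter fun y' => R (i, y) (j, y')).card = k)
    (hcross : ∀ (i j : Fin f) (y y' : Fin v), i ≠ 0 → j ≠ 0 → i ≠ j →
      (Finset.univ.filter fun x => R (0, x) (i, y) ∧ R (0, x) (j, y')).card =
        if R (i, y) (j, y') then σ else τ)
    {i j : Fin f} (hi : i ≠ 0) (hj : j ≠ 0) (hij : i ≠ j) (a : Fin v) (n : ℕ) :
    ∑ b, (#{x | R (0, x) (i, a) ∧ R (0, x) (j, b)}).choose n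
      = k * σ.choose n + (v - k) * τ.choose n := by
  have hadj := hreg i j a hij
  have hnonadj : #{b | ¬R (i, a) (j, b)} = v - k := by
    have := card_filter_add_card_filter_not (s := univ) fun b => R (i, a) (j, b)
    simp only [hadj, card_univ, Fintype.card_fin] at this
    omega
  simp only [hcross i j a _ hi hj hij, apply_ite (Nat.choose · n)]
  rw [sum_ite, sum_const, sum_const, hadj, hnonadj, smul_eq_mul, smul_eq_mul]

theorem sum_choose_card_commonNeighbors_erase
    (hreg : ∀ (i j : Fin f) (y : Fin v), i ≠ j →
      (Finset.univ.filter fun y' => R (i, y) (j, y')).card = k)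
    (hsame : ∀ (i : Fin f) (y y' : Fin v), i ≠ 0 → y ≠ y' →
      (Finset.univ.filter fun x => R (0, x) (i, y) ∧ R (0, x) (i, y')).card = lam)
    (hcross : ∀ (i j : Fin f) (y y' : Fin v), i ≠ 0 → j ≠ 0 → i ≠ j →
      (Finset.univ.filter fun x => R (0, x) (i, y) ∧ R (0, x) (j, y')).card =
        if R (i, y) (j, y') then σ else τ)
    {y : Fin f × Fin v} (hy : y.1 ≠ 0) (n : ℕ) :
    ∑ y' ∈ (univ.erase 0 ×ˢ univ).erase y, (#{x | R (0, x) y ∧ R (0, x) y'}).choose n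
      = (v - 1) * lam.choose n + (f - 2) * (k * σ.choose n + (v - k) * τ.choose n) := by
  obtain ⟨i, a⟩ := y
  have hcard : #(univ \ {0, i} : Finset (Fin f)) = f - 2 := by
    rw [card_sdiff_of_subset (subset_univ _), card_pair hy.symm, card_univ, Fintype.card_fin]
  rw [sum_erase_product_univ hy, sum_choose_card_commonNeighbors_same_fiber hsame hy,
    sum_congr rfl fun j hj => sum_choose_card_commonNeighbors_other_fiber hreg hcross hy
      (by simp_all) (by simp_all [eq_comm]) a n, sum_const, hcard, smul_eq_mul]

end LinkedDesign

theorem linked_design_second_count_general (f v k lam σ τ : ℕ) [NeZero f]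
    (R : Fin f × Fin v → Fin f × Fin v → Prop) [DecidableRel R]
    (hreg : ∀ (i j : Fin f) (y : Fin v), i ≠ j →
      (Finset.univ.filter fun y' => R (i, y) (j, y')).card = k)
    (hsame : ∀ (i : Fin f) (y y' : Fin v), i ≠ 0 → y ≠ y' →
      (Finset.univ.filter fun x => R (0, x) (i, y) ∧ R (0, x) (i, y')).card = lam)
    (hcross : ∀ (i j : Fin f) (y y' : Fin v), i ≠ 0 → j ≠ 0 → i ≠ j →
      (Finset.univ.filter fun x => R (0, x) (i, y) ∧ R (0, x) (j, y')).card =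
        if R (i, y) (j, y') then σ else τ) :
    2 * ∑ S ∈ Finset.powersetCard 4 (Finset.univ : Finset (Fin v)),
        Nat.choose (((Finset.univ : Finset (Fin f × Fin v)).filter
          (fun y => y.1 ≠ 0 ∧ ∀ x ∈ S, R (0, x) y)).card) 2
      = (f - 1) * v * ((f - 2) * k * Nat.choose σ 4 + (v - 1) * Nat.choose lam 4
          + (f - 2) * (v - k) * Nat.choose τ 4) := by
  set B : Finset (Fin f × Fin v) := univ.erase 0 ×ˢ univ
  calc _ = ∑ p ∈ B.offDiag, (#{x | R (0, x) p.1 ∧ R (0, x) p.2}).choose 4 := by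
        rw [mul_sum, ← sum_powersetCard_two_mul_choose_two_eq_sum_offDiag]
        refine sum_congr rfl fun S _ => ?_
        congr 3
        ext
        simp [B]
    _ = ∑ y ∈ B, ∑ y' ∈ B.erase y, (#{x | R (0, x) y ∧ R (0, x) y'}).choose 4 := sum_offDiag _ _
    _ = ∑ y ∈ B, ((v - 1) * lam.choose 4 + (f - 2) * (k * σ.choose 4 + (v - k) * τ.choose 4)) :=
        sum_congr rfl fun y hy => sum_choose_card_commonNeighbors_erase hreg hsame hcross
          (ne_of_mem_erase (mem_product.1 hy).1) 4
    _ = _ := by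
        rw [sum_const, smul_eq_mul, card_product, card_erase_of_mem (mem_univ 0)]
        simp only [card_univ, Fintype.card_fin]
        ring

/-- Second counting identity for linked systems of symmetric designs:
`2·Σ_{S ∈ binom(X₁,4)} C(α(S),2)
  = (f-1)·v·[(f-2)·k·C(σ,4) + (v-1)·C(λ,4) + (f-2)·(v-k)·C(τ,4)]`. -/
theorem linked_design_second_count (f v k lam σ τ : ℕ) [NeZero f] (hf : 3 ≤ f)
    (R : Fin f × Fin v → Fin f × Fin v → Prop) [DecidableRel R]
    (hsym : ∀ p q, R p q ↔ R q p)
    (hreg : ∀ (i j : Fin f) (y : Fin v), i ≠ j →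
      (Finset.univ.filter fun y' => R (i, y) (j, y')).card = k)
    (hsame : ∀ (i : Fin f) (y y' : Fin v), i ≠ 0 → y ≠ y' →
      (Finset.univ.filter fun x => R (0, x) (i, y) ∧ R (0, x) (i, y')).card = lam)
    (hcross : ∀ (i j : Fin f) (y y' : Fin v), i ≠ 0 → j ≠ 0 → i ≠ j →
      (Finset.univ.filter fun x => R (0, x) (i, y) ∧ R (0, x) (j, y')).card =
        if R (i, y) (j, y') then σ else τ) :
    2 * ∑ S ∈ Finset.powersetCard 4 (Finset.univ : Finset (Fin v)),
        Nat.choose (((Finset.univ : Finset (Fin f × Fin v)).filter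
          (fun y => y.1 ≠ 0 ∧ ∀ x ∈ S, R (0, x) y)).card) 2
      = (f - 1) * v * ((f - 2) * k * Nat.choose σ 4 + (v - 1) * Nat.choose lam 4
          + (f - 2) * (v - k) * Nat.choose τ 4) :=
  linked_design_second_count_general f v k lam σ τ R hreg hsame hcross
end

section
/- Let v ≥ 15 be an integer. Then there is no rational number k satisfying v(v+1)² + 4k²(v+3) - 4kv(v+3) = 0 with k an integer, because the discriminant condition requires v(v-1)(v+3) to be a perfect square. -/
/-
Completing the square turns the equation into `(v + 3)(2k - v)² = v(v - 1)`. Since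
`v(v - 1) = (v + 3)(v - 4) + 12`, this forces `v + 3 ∣ 12`, impossible once `v + 3 > 12`.
-/

theorem add_three_mul_sq_eq_of_eq_zero {R : Type*} [CommRing R] {v k : R}
    (h : v * (v + 1) ^ 2 + 4 * k ^ 2 * (v + 3) - 4 * k * v * (v + 3) = 0) :
    (v + 3) * (2 * k - v) ^ 2 = v * (v - 1) := by
  linear_combination h

theorem add_three_dvd_twelve_of_dvd {R : Type*} [CommRing R] {v : R}
    (h : v + 3 ∣ v * (v - 1)) : v + 3 ∣ 12 := by
  rw [show v * (v - 1) = (v + 3) * (v - 4) + 12 by ring] at h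
  exact (dvd_add_right (dvd_mul_right _ _)).mp h

/-- For every integer `v ≥ 15`, there is no integer `k` with
`v(v+1)² + 4k²(v+3) - 4kv(v+3) = 0`. -/
theorem no_integral_quadratic_solution (v : ℤ) (hv : 15 ≤ v) :
    ¬ ∃ k : ℤ, v * (v + 1) ^ 2 + 4 * k ^ 2 * (v + 3) - 4 * k * v * (v + 3) = 0 := by
  rintro ⟨k, hk⟩
  have hdvd : v + 3 ∣ 12 :=
    add_three_dvd_twelve_of_dvd ⟨_, (add_three_mul_sq_eq_of_eq_zero hk).symm⟩
  have := Int.le_of_dvd (by norm_num) hdvd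
  omega
end

section
/- Let C be a binary code of length d (d a perfect square, d = m², d > 4) with weight enumerator W_C(x,y) = x^d + (d(d-2)/2)·x^{(d+√d)/2} y^{(d-√d)/2} + 2(d-1)·x^{d/2} y^{d/2} + (d(d-2)/2)·x^{(d-√d)/2} y^{(d+√d)/2} + y^d. Then the MacWilliams transform (1/d²)·W_C(x+y, x-y) has zero coefficient on x^{d-j} y^j for j = 1, 2, 3, 4, 5, and the coefficient on x^{d-6} y^6 equals d(d-1)(d-2)(d-4)/360. -/
/-!
The coefficient of `X^j` in `(1 + X)^(d - w) (1 - X)^w` is the Krawtchouk number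
`K_j(w) = ∑ᵢ (-1)^i C(w, i) C(d - w, j - i)`. Reading the binomial coefficients as generalized
binomials `Ring.choose` over `ℚ`, it is a polynomial in `d` and `w`, so with `d = m²` and the
weights `0, (d - m)/2, d/2, (d + m)/2, d` every coefficient of the transform is a rational function
of `m`, and the claims for `j ≤ 6` become polynomial identities in `m`. Evenness of `d` (hence
of `m`) is what makes the halvings of the exponents exact.
-/

open Polynomial Finset

/-- The MacWilliams transform `(1/d²)·W_C(x+y, x-y)` of the Kerdock-like weight enumerator,
dehomogenized at `x = 1` (so the coefficient of `X^j` is the coefficient of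
`x^{d-j} y^j` of the homogeneous transform). -/
noncomputable def kerdockMacWilliams (d m : ℕ) : Polynomial ℚ :=
  Polynomial.C (((d : ℚ) ^ 2)⁻¹) *
    ((1 + Polynomial.X) ^ d
      + Polynomial.C ((d : ℚ) * ((d : ℚ) - 2) / 2)
          * (1 + Polynomial.X) ^ ((d + m) / 2) * (1 - Polynomial.X) ^ ((d - m) / 2)
      + Polynomial.C (2 * ((d : ℚ) - 1))
          * (1 + Polynomial.X) ^ (d / 2) * (1 - Polynomial.X) ^ (d / 2)
      + Polynomial.C ((d : ℚ) * ((d : ℚ) - 2) / 2)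
          * (1 + Polynomial.X) ^ ((d - m) / 2) * (1 - Polynomial.X) ^ ((d + m) / 2)
      + (1 - Polynomial.X) ^ d)

lemma Ring.choose_eq_prod_range_div {K : Type*} [Field K] [CharZero K] (r : K) (n : ℕ) :
    Ring.choose r n = (∏ j ∈ range n, (r - j)) / n.factorial := by
  rw [Ring.choose_eq_smul, ← aeval_eq_smeval, aeval_def, ← eval_map, descPochhammer_map,
    descPochhammer_eval_eq_prod_range, smul_eq_mul, div_eq_inv_mul]

lemma coeff_one_sub_X_pow {R : Type*} [CommRing R] (n k : ℕ) :
    ((1 - X : R[X]) ^ n).coeff k = (-1) ^ k * n.choose k := by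
  have h (i : ℕ) : (-X : R[X]) ^ i = C ((-1) ^ i) * X ^ i := by
    rw [neg_eq_neg_one_mul, mul_pow, C_pow, C_neg, C_1]
  rw [sub_eq_add_neg, add_comm, add_pow]
  simp only [h, one_pow, mul_one, mul_right_comm _ (X ^ _), ← C_eq_natCast, ← C_mul,
    finsetSum_coeff, coeff_C_mul_X_pow]
  simp +contextual [Nat.choose_eq_zero_of_lt]

noncomputable def krawtchouk {R : Type*} [CommRing R] [BinomialRing R] (n w : R) (j : ℕ) : R :=
  ∑ i ∈ range (j + 1), (-1) ^ i * Ring.choose w i * Ring.choose (n - w) (j - i)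

lemma coeff_one_add_X_pow_mul_one_sub_X_pow {R : Type*} [CommRing R] [BinomialRing R]
    (a w j : ℕ) :
    ((1 + X : R[X]) ^ a * (1 - X) ^ w).coeff j = krawtchouk ((a + w : ℕ) : R) w j := by
  rw [mul_comm, coeff_mul, Nat.sum_antidiagonal_eq_sum_range_succ_mk, krawtchouk]
  refine sum_congr rfl fun i _ => ?_
  rw [coeff_one_sub_X_pow, coeff_one_add_X_pow, Nat.cast_add, add_sub_cancel_right,
    Ring.choose_natCast, Ring.choose_natCast, mul_assoc]

/-- `∑_w A_w K_j(w)` for the weight distribution `A` of the statement, written with `d = m²`. -/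
noncomputable def kerdockKrawtchoukSum (m : ℚ) (j : ℕ) : ℚ :=
  krawtchouk (m ^ 2) 0 j + m ^ 2 * (m ^ 2 - 2) / 2 * krawtchouk (m ^ 2) ((m ^ 2 - m) / 2) j
    + 2 * (m ^ 2 - 1) * krawtchouk (m ^ 2) (m ^ 2 / 2) j
    + m ^ 2 * (m ^ 2 - 2) / 2 * krawtchouk (m ^ 2) ((m ^ 2 + m) / 2) j
    + krawtchouk (m ^ 2) (m ^ 2) j

lemma coeff_kerdockMacWilliams {d m : ℕ} (hd : d = m ^ 2) (heven : Even d) (j : ℕ) :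
    (kerdockMacWilliams d m).coeff j = ((d : ℚ) ^ 2)⁻¹ * kerdockKrawtchoukSum m j := by
  obtain ⟨k, hk⟩ : Even m := (Nat.even_pow.mp (hd ▸ heven)).1
  obtain ⟨r, hr⟩ := heven
  have hmd : m ≤ d := hd ▸ Nat.le_self_pow two_ne_zero m
  have hw₁ : (((d - m) / 2 : ℕ) : ℚ) = ((d : ℚ) - m) / 2 := by
    rw [eq_div_iff two_ne_zero, ← Nat.cast_sub hmd]; norm_cast; omega
  have hw₂ : ((d / 2 : ℕ) : ℚ) = (d : ℚ) / 2 := by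
    rw [eq_div_iff two_ne_zero]; norm_cast; omega
  have hw₃ : (((d + m) / 2 : ℕ) : ℚ) = ((d : ℚ) + m) / 2 := by
    rw [eq_div_iff two_ne_zero]; norm_cast; omega
  have hweight_zero : (1 + X : ℚ[X]) ^ d = (1 + X) ^ d * (1 - X) ^ 0 := by rw [pow_zero, mul_one]
  have hweight_full : (1 - X : ℚ[X]) ^ d = (1 + X) ^ 0 * (1 - X) ^ d := by rw [pow_zero, one_mul]
  rw [kerdockMacWilliams, hweight_zero, hweight_full]
  simp only [coeff_C_mul, coeff_add, mul_assoc, coeff_one_add_X_pow_mul_one_sub_X_pow,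
    show (d + m) / 2 + (d - m) / 2 = d by omega, show d / 2 + d / 2 = d by omega,
    show (d - m) / 2 + (d + m) / 2 = d by omega, add_zero, zero_add, Nat.cast_zero,
    hw₁, hw₂, hw₃, show (d : ℚ) = (m : ℚ) ^ 2 by exact_mod_cast hd]
  rw [kerdockKrawtchoukSum]
  ring

lemma kerdockKrawtchoukSum_eq_zero (m : ℚ) {j : ℕ} (h1 : 1 ≤ j) (h5 : j ≤ 5) :
    kerdockKrawtchoukSum m j = 0 := by
  interval_cases j <;>
  · simp only [kerdockKrawtchoukSum, krawtchouk, sum_range_succ, sum_range_zero,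
      Ring.choose_eq_prod_range_div, prod_range_succ, prod_range_zero]
    norm_num [Nat.factorial]
    ring

lemma kerdockKrawtchoukSum_six (m : ℚ) :
    kerdockKrawtchoukSum m 6
      = (m ^ 2) ^ 2 * (m ^ 2 * (m ^ 2 - 1) * (m ^ 2 - 2) * (m ^ 2 - 4) / 360) := by
  simp only [kerdockKrawtchoukSum, krawtchouk, sum_range_succ, sum_range_zero,
    Ring.choose_eq_prod_range_div, prod_range_succ, prod_range_zero]
  norm_num [Nat.factorial]
  ring

theorem kerdock_dual_weight_enumerator_general (d m : ℕ) (hd : d = m ^ 2) (heven : Even d) :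
    (∀ j, 1 ≤ j → j ≤ 5 → (kerdockMacWilliams d m).coeff j = 0) ∧
    (kerdockMacWilliams d m).coeff 6
      = (d : ℚ) * ((d : ℚ) - 1) * ((d : ℚ) - 2) * ((d : ℚ) - 4) / 360 := by
  refine ⟨fun j h1 h5 => ?_, ?_⟩
  · rw [coeff_kerdockMacWilliams hd heven, kerdockKrawtchoukSum_eq_zero _ h1 h5, mul_zero]
  · have hdq : (d : ℚ) = (m : ℚ) ^ 2 := by exact_mod_cast hd
    rw [coeff_kerdockMacWilliams hd heven, kerdockKrawtchoukSum_six, ← hdq]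
    rcases eq_or_ne (d : ℚ) 0 with hd0 | hd0
    · simp [hd0]
    · field_simp

/-- For `d = m²` even, `d > 4`, the MacWilliams transform of the Kerdock-like weight
enumerator has vanishing coefficients in degrees `1,…,5`, and its degree-6 coefficient is
`d(d-1)(d-2)(d-4)/360`. -/
theorem kerdock_dual_weight_enumerator (d m : ℕ) (hm : 2 ≤ m) (hd : d = m ^ 2)
    (hd4 : 4 < d) (heven : Even d) :
    (∀ j, 1 ≤ j → j ≤ 5 → (kerdockMacWilliams d m).coeff j = 0) ∧
    (kerdockMacWilliams d m).coeff 6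
      = (d : ℚ) * ((d : ℚ) - 1) * ((d : ℚ) - 2) * ((d : ℚ) - 4) / 360 :=
  kerdock_dual_weight_enumerator_general d m hd heven
end

section
/- Let M be real mutually unbiased bases of ℝ^d (d a perfect square, d ≥ 4), X = M ∪ (-M), z ∈ X, X_1(z) = {y ∈ X : ⟨y,z⟩ = 1/√d}, and suppose x, y ∈ X_1(z) lie in different bases. Then the number of w ∈ X_1(z) in the same basis as x with ⟨w,y⟩ = 1/√d equals (d+√d)/2 - 1 if ⟨x,y⟩ = 1/√d, and equals (d+√d)/2 if ⟨x,y⟩ = -1/√d. -/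
/-!
Let `z` come from basis `k`. Its inner products with basis `i ≠ k` are `±1/√d`, so flipping
signs turns basis `i` into an orthonormal basis `w` with every `⟪w c, z⟫ = 1/√d`, and the vectors
of `X₁(z)` from basis `i` are exactly the `w c`. Parseval in `w` gives
`∑ c, ⟪w c, y⟫ = √d ⟪y, z⟫ = 1`; as each term is `±1/√d`, exactly `(d + √d)/2` of them equal
`1/√d`, and the count asked for is this number, less one if `x` is among them.
-/

open scoped RealInnerProductSpace
open Finset

lemma card_filter_eq_of_forall_eq_or_eq_neg {ι : Type*} [Fintype ι] {v : ι → ℝ} {t : ℝ}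
    (ht : t ≠ 0) (hv : ∀ c, v c = t ∨ v c = -t) :
    (#{c | v c = t} : ℝ) = (Fintype.card ι + (∑ c, v c) / t) / 2 := by
  have hsum : ∑ c, v c = t * #{c | v c = t} - t * #{c | ¬v c = t} := by
    rw [← sum_filter_add_sum_filter_not univ (fun c => v c = t),
      sum_congr rfl fun c hc => (mem_filter.1 hc).2,
      sum_congr rfl fun c hc => (hv c).resolve_left (mem_filter.1 hc).2]
    simp only [sum_const, nsmul_eq_mul]
    ring
  have hcard : (#{c | v c = t} : ℝ) + #{c | ¬v c = t} = Fintype.card ι := by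
    exact_mod_cast card_filter_add_card_filter_not (s := univ) _
  rw [hsum]
  field_simp
  linarith

section Signed

variable {E : Type*} [NormedAddCommGroup E] [InnerProductSpace ℝ E]

lemma inner_eq_or_eq_neg_of_eq_or_eq_neg {p q u w : E} {t : ℝ} (hu : u = p ∨ u = -p)
    (hw : w = q ∨ w = -q) (h : ⟪p, q⟫ = t ∨ ⟪p, q⟫ = -t) : ⟪u, w⟫ = t ∨ ⟪u, w⟫ = -t := by
  rcases hu with rfl | rfl <;> rcases hw with rfl | rfl <;> rcases h with h | h <;>
    simp [h, inner_neg_left, inner_neg_right]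

lemma Orthonormal.inner_eq_zero_or_abs_eq_one {ι : Type*} {v : ι → E} (hv : Orthonormal ℝ v)
    {u w : E} {a b : ι} (hu : u = v a ∨ u = -v a) (hw : w = v b ∨ w = -v b) :
    ⟪u, w⟫ = 0 ∨ |⟪u, w⟫| = 1 := by
  classical
  have h : ⟪v a, v b⟫ = 0 ∨ |⟪v a, v b⟫| = 1 := by
    rw [orthonormal_iff_ite.1 hv]
    split_ifs <;> simp
  rcases hu with rfl | rfl <;> rcases hw with rfl | rfl <;>
    simpa [inner_neg_left, inner_neg_right] using h

end Signed

section Align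

variable {ι E : Type*} [NormedAddCommGroup E] [InnerProductSpace ℝ E]
  {v : ι → E} {z : E} {t : ℝ}

/-- When `⟪v c, z⟫ = ±t`, the scalar is `±1`: this picks the one of `v c`, `-v c` whose
inner product with `z` is `t`. -/
noncomputable def alignTo (v : ι → E) (z : E) (t : ℝ) (c : ι) : E := (⟪v c, z⟫ / t) • v c

lemma alignTo_eq_or_eq_neg (ht : t ≠ 0) {c : ι} (h : ⟪v c, z⟫ = t ∨ ⟪v c, z⟫ = -t) :
    alignTo v z t c = v c ∨ alignTo v z t c = -v c := by
  rcases h with h | h <;> simp [alignTo, h, ht]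

lemma inner_alignTo_left (ht : t ≠ 0) {c : ι} (h : ⟪v c, z⟫ = t ∨ ⟪v c, z⟫ = -t) :
    ⟪alignTo v z t c, z⟫ = t := by
  rcases h with h | h <;> simp [alignTo, h, ht]

lemma eq_alignTo_of_inner_eq (ht : t ≠ 0) {u : E} {c : ι} (hu : u = v c ∨ u = -v c)
    (huz : ⟪u, z⟫ = t) : u = alignTo v z t c := by
  rcases hu with rfl | rfl
  · simp [alignTo, huz, ht]
  · rw [inner_neg_left, neg_eq_iff_eq_neg] at huz
    simp [alignTo, huz, ht]

lemma alignTo_injective (hv : Orthonormal ℝ v) (ht : t ≠ 0)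
    (hvz : ∀ c, ⟪v c, z⟫ = t ∨ ⟪v c, z⟫ = -t) : Function.Injective (alignTo v z t) := by
  intro c c' h
  by_contra hne
  have key := congrArg (⟪·, v c⟫) h
  simp only [alignTo, real_inner_smul_left, real_inner_self_eq_norm_sq, hv.1 c,
    hv.2 (Ne.symm hne), one_pow, mul_one, mul_zero, div_eq_zero_iff, ht, or_false] at key
  rcases hvz c with h | h <;> rw [h] at key <;> simp [ht] at key

lemma setOf_inner_eq_eq_range_alignTo (ht : t ≠ 0) (hvz : ∀ c, ⟪v c, z⟫ = t ∨ ⟪v c, z⟫ = -t) :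
    {u | (∃ c, u = v c ∨ u = -v c) ∧ ⟪u, z⟫ = t} = Set.range (alignTo v z t) := by
  ext u
  constructor
  · rintro ⟨⟨c, hc⟩, huz⟩
    exact ⟨c, (eq_alignTo_of_inner_eq ht hc huz).symm⟩
  · rintro ⟨c, rfl⟩
    exact ⟨⟨c, alignTo_eq_or_eq_neg ht (hvz c)⟩, inner_alignTo_left ht (hvz c)⟩

lemma OrthonormalBasis.sum_inner_alignTo [Fintype ι] (b : OrthonormalBasis ι ℝ E) (z y : E)
    (t : ℝ) : ∑ c, ⟪alignTo b z t c, y⟫ = ⟪y, z⟫ / t := by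
  rw [← b.sum_inner_mul_inner y z, sum_div]
  refine sum_congr rfl fun c _ => ?_
  rw [alignTo, real_inner_smul_left, real_inner_comm y]
  ring

theorem Orthonormal.ncard_inner_eq_inner_eq [Fintype ι] (hv : Orthonormal ℝ v)
    (hspan : Submodule.span ℝ (Set.range v) = ⊤) {y : E} (ht : t ≠ 0)
    (hvz : ∀ c, ⟪v c, z⟫ = t ∨ ⟪v c, z⟫ = -t) (hvy : ∀ c, ⟪v c, y⟫ = t ∨ ⟪v c, y⟫ = -t) :
    ({u | ((∃ c, u = v c ∨ u = -v c) ∧ ⟪u, z⟫ = t) ∧ ⟪u, y⟫ = t}.ncard : ℝ) =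
      (Fintype.card ι + ⟪y, z⟫ / t / t) / 2 := by
  have hset : {u | ((∃ c, u = v c ∨ u = -v c) ∧ ⟪u, z⟫ = t) ∧ ⟪u, y⟫ = t} =
      alignTo v z t '' ↑({c | ⟪alignTo v z t c, y⟫ = t} : Finset ι) := by
    rw [Set.ofPred_and, setOf_inner_eq_eq_range_alignTo ht hvz, ← Set.image_preimage_eq_range_inter,
      coe_filter_univ]
    rfl
  have hsign (c : ι) : ⟪alignTo v z t c, y⟫ = t ∨ ⟪alignTo v z t c, y⟫ = -t :=
    inner_eq_or_eq_neg_of_eq_or_eq_neg (alignTo_eq_or_eq_neg ht (hvz c)) (Or.inl rfl) (hvy c)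
  have hsum := (OrthonormalBasis.mk hv hspan.ge).sum_inner_alignTo z y t
  rw [OrthonormalBasis.coe_mk] at hsum
  rw [hset, Set.ncard_image_of_injective _ (alignTo_injective hv ht hvz), Set.ncard_coe_finset,
    card_filter_eq_of_forall_eq_or_eq_neg ht hsign, hsum]

end Align

theorem mub_subconstituent_cross_count_general (d f : ℕ) (hd : 4 ≤ d)
    (B : Fin f → Fin d → EuclideanSpace ℝ (Fin d))
    (horth : ∀ i, Orthonormal ℝ (B i))
    (hbasis : ∀ i, Submodule.span ℝ (Set.range (B i)) = ⊤)
    (hmub : ∀ i j a b, i ≠ j →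
      ⟪B i a, B j b⟫ = 1 / Real.sqrt d ∨ ⟪B i a, B j b⟫ = -(1 / Real.sqrt d))
    (z : EuclideanSpace ℝ (Fin d)) (hz : ∃ i a, z = B i a ∨ z = -B i a)
    (X₁ : Set (EuclideanSpace ℝ (Fin d)))
    (hX₁ : X₁ = {y | (∃ i a, y = B i a ∨ y = -B i a) ∧ ⟪y, z⟫ = 1 / Real.sqrt d})
    (x y : EuclideanSpace ℝ (Fin d)) (hx : x ∈ X₁) (hy : y ∈ X₁)
    (i j : Fin f) (hij : i ≠ j)
    (hxi : ∃ a, x = B i a ∨ x = -B i a) (hyj : ∃ b, y = B j b ∨ y = -B j b) :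
    (⟪x, y⟫ = 1 / Real.sqrt d →
      (({w ∈ X₁ | w ≠ x ∧ (∃ c, w = B i c ∨ w = -B i c) ∧
          ⟪w, y⟫ = 1 / Real.sqrt d}.ncard : ℝ) = ((d : ℝ) + Real.sqrt d) / 2 - 1)) ∧
    (⟪x, y⟫ = -(1 / Real.sqrt d) →
      (({w ∈ X₁ | w ≠ x ∧ (∃ c, w = B i c ∨ w = -B i c) ∧
          ⟪w, y⟫ = 1 / Real.sqrt d}.ncard : ℝ) = ((d : ℝ) + Real.sqrt d) / 2)) := by
  subst hX₁
  obtain ⟨k, a₀, hzk⟩ := hz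
  obtain ⟨a, hxa⟩ := hxi
  obtain ⟨e, hye⟩ := hyj
  set t := 1 / Real.sqrt d
  have ht : 0 < t ∧ t < 1 := ⟨by positivity, by
    rw [div_lt_one (by positivity), Real.lt_sqrt zero_le_one]
    norm_cast
    omega⟩
  have hki : k ≠ i := by
    rintro rfl
    rcases (horth k).inner_eq_zero_or_abs_eq_one hxa hzk with h | h <;>
      simp only [hx.2, abs_of_pos ht.1] at h <;> linarith
  have hcount := (horth i).ncard_inner_eq_inner_eq (hbasis i) ht.1.ne'
    (fun c => inner_eq_or_eq_neg_of_eq_or_eq_neg (Or.inl rfl) hzk (hmub i k c a₀ hki.symm))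
    (fun c => inner_eq_or_eq_neg_of_eq_or_eq_neg (Or.inl rfl) hye (hmub i j c e hij))
  set A := {u | ((∃ c, u = B i c ∨ u = -B i c) ∧ ⟪u, z⟫ = t) ∧ ⟪u, y⟫ = t}
  have hA : {w ∈ {y | (∃ i a, y = B i a ∨ y = -B i a) ∧ ⟪y, z⟫ = t} | w ≠ x ∧
      (∃ c, w = B i c ∨ w = -B i c) ∧ ⟪w, y⟫ = t} = A \ {x} := by
    ext u
    exact ⟨fun ⟨⟨_, huz⟩, hux, hui, huy⟩ => ⟨⟨⟨hui, huz⟩, huy⟩, hux⟩,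
      fun ⟨⟨⟨hui, huz⟩, huy⟩, hux⟩ => ⟨⟨⟨i, hui⟩, huz⟩, hux, hui, huy⟩⟩
  have hcard : (A.ncard : ℝ) = (d + Real.sqrt d) / 2 := by
    rw [hcount, Fintype.card_fin, hy.2, div_self ht.1.ne', one_div_one_div]
  refine ⟨fun hxy => ?_, fun hxy => ?_⟩
  · have hxA : x ∈ A := ⟨⟨⟨a, hxa⟩, hx.2⟩, hxy⟩
    have hpos : (0 : ℝ) < A.ncard := by rw [hcard]; positivity
    have hfin : A.Finite := Set.finite_of_ncard_pos (by exact_mod_cast hpos)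
    rw [hA, ← hcard, ← Set.ncard_sdiff_singleton_add_one hxA hfin]
    push_cast
    ring
  · have hxA : x ∉ A := fun h => by linarith [h.2]
    rw [hA, Set.sdiff_singleton_eq_self hxA, hcard]

/-- In the subconstituent `X₁(z)` of a real MUB (`d` a perfect square, `d ≥ 4`), for
`x, y ∈ X₁(z)` from different bases, the number of `w ∈ X₁(z)` in the same basis as `x`
(other than `x`) with `⟪w, y⟫ = 1/√d` equals `(d+√d)/2 - 1` if `⟪x,y⟫ = 1/√d` and
`(d+√d)/2` if `⟪x,y⟫ = -1/√d`. -/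
theorem mub_subconstituent_cross_count (d f : ℕ) (hd : 4 ≤ d)
    (hsq : ∃ m : ℕ, d = m ^ 2) (hf : 2 ≤ f)
    (B : Fin f → Fin d → EuclideanSpace ℝ (Fin d))
    (horth : ∀ i, Orthonormal ℝ (B i))
    (hbasis : ∀ i, Submodule.span ℝ (Set.range (B i)) = ⊤)
    (hmub : ∀ i j a b, i ≠ j →
      ⟪B i a, B j b⟫ = 1 / Real.sqrt d ∨ ⟪B i a, B j b⟫ = -(1 / Real.sqrt d))
    (z : EuclideanSpace ℝ (Fin d)) (hz : ∃ i a, z = B i a ∨ z = -B i a)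
    (X₁ : Set (EuclideanSpace ℝ (Fin d)))
    (hX₁ : X₁ = {y | (∃ i a, y = B i a ∨ y = -B i a) ∧ ⟪y, z⟫ = 1 / Real.sqrt d})
    (x y : EuclideanSpace ℝ (Fin d)) (hx : x ∈ X₁) (hy : y ∈ X₁)
    (i j : Fin f) (hij : i ≠ j)
    (hxi : ∃ a, x = B i a ∨ x = -B i a) (hyj : ∃ b, y = B j b ∨ y = -B j b) :
    (⟪x, y⟫ = 1 / Real.sqrt d →
      (({w ∈ X₁ | w ≠ x ∧ (∃ c, w = B i c ∨ w = -B i c) ∧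
          ⟪w, y⟫ = 1 / Real.sqrt d}.ncard : ℝ) = ((d : ℝ) + Real.sqrt d) / 2 - 1)) ∧
    (⟪x, y⟫ = -(1 / Real.sqrt d) →
      (({w ∈ X₁ | w ≠ x ∧ (∃ c, w = B i c ∨ w = -B i c) ∧
          ⟪w, y⟫ = 1 / Real.sqrt d}.ncard : ℝ) = ((d : ℝ) + Real.sqrt d) / 2)) :=
  mub_subconstituent_cross_count_general d f hd B horth hbasis hmub z hz X₁ hX₁ x y hx hy i j hij
    hxi hyj
end
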